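/- Let ρ be a d×d density matrix and let U₁,…,U_N (N ≥ 3) be d×d unitary matrices. Then ∑_{s=1}^{N} √(I_ρ(U_s)) ≥ (1/(N−2)) { ∑_{1≤s<t≤N} √( I_ρ(U_s + U_t) ) − √( I_ρ( ∑_{s=1}^{N} U_s ) ) }. -/

import Mathlib

open Matrix Finset
open scoped ComplexOrder

/-- The positive semidefinite square root of a positive semidefinite matrix
(the definition `Matrix.PosSemidef.sqrt` of the older Mathlib, since removed). -/
noncomputable def Matrix.PosSemidef.sqrt {n 𝕜 : Type*} [Fintype n] [DecidableEq n] [RCLike 𝕜]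
    {A : Matrix n n 𝕜} (hA : A.PosSemidef) : Matrix n n 𝕜 :=
  hA.1.eigenvectorUnitary.1 * diagonal ((↑) ∘ (√·) ∘ hA.1.eigenvalues) *
  (star hA.1.eigenvectorUnitary : Matrix n n 𝕜)

/-- Wigner–Yanase skew information `I_ρ(A) = (1/2) Tr([√ρ, A]† [√ρ, A])` of a matrix `A`
with respect to a positive semidefinite matrix `ρ`, where `√ρ = hρ.sqrt` is the positive
semidefinite square root of `ρ`. -/
noncomputable def skewInfo {d : ℕ} {ρ : Matrix (Fin d) (Fin d) ℂ} (hρ : ρ.PosSemidef)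
    (A : Matrix (Fin d) (Fin d) ℂ) : ℝ :=
  (1 / 2 : ℝ) *
    (((hρ.sqrt * A - A * hρ.sqrt)ᴴ * (hρ.sqrt * A - A * hρ.sqrt)).trace).re

/-!
The map `A ↦ [√ρ, A] / √2`, read as a vector of `ℂ^(d × d)`, is additive and has norm
`√(I_ρ(A))`, so the theorem is the generalized Hlawka inequality (Djoković)
`∑_{i<j} ‖xᵢ + xⱼ‖ ≤ (n - 2) ∑ ‖xᵢ‖ + ‖∑ xᵢ‖` in a real inner product space.
For the latter put `aᵢⱼ = ‖xᵢ‖ + ‖xⱼ‖`, `pᵢⱼ = ‖xᵢ + xⱼ‖`, `S = ∑ ‖xᵢ‖` and `s = ‖∑ xᵢ‖`.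
By the triangle inequality `pᵢⱼ ≤ aᵢⱼ` and `pᵢⱼ ≤ S + s - aᵢⱼ`, so every
`(aᵢⱼ - pᵢⱼ) (S + s - aᵢⱼ - pᵢⱼ)` is nonnegative; the identity
`∑_{i<j} ‖xᵢ + xⱼ‖² = (n - 2) ∑ ‖xᵢ‖² + ‖∑ xᵢ‖²`, applied both to the `xᵢ` and to the reals `‖xᵢ‖`,
shows that the sum of these products is `(S + s) ((n - 2) S + s - ∑ pᵢⱼ)`.
-/

section Hlawka

variable {ι : Type*} [Fintype ι]

theorem norm_add_le_sum_norm_add_norm_sum {E : Type*} [SeminormedAddCommGroup E]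
    [DecidableEq ι] (x : ι → E) {i j : ι} (hij : i ≠ j) :
    ‖x i + x j‖ ≤ ∑ k, ‖x k‖ + ‖∑ k, x k‖ - (‖x i‖ + ‖x j‖) := by
  have hx : x i + x j = ∑ k, x k - ∑ k ∈ {i, j}ᶜ, x k := by
    rw [eq_sub_iff_add_eq, ← sum_pair hij, sum_add_sum_compl]
  have hnorm : ∑ k ∈ {i, j}ᶜ, ‖x k‖ = ∑ k, ‖x k‖ - (‖x i‖ + ‖x j‖) := by
    rw [eq_sub_iff_add_eq', ← sum_pair (f := fun k => ‖x k‖) hij, sum_add_sum_compl]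
  calc ‖x i + x j‖ ≤ ‖∑ k, x k‖ + ∑ k ∈ {i, j}ᶜ, ‖x k‖ := by
        rw [hx]; exact (norm_sub_le _ _).trans (add_le_add le_rfl (norm_sum_le _ _))
    _ = _ := by rw [hnorm]; ring

variable [LinearOrder ι] [LocallyFiniteOrderTop ι] [LocallyFiniteOrderBot ι]

theorem sum_sum_Ioi_add_eq_card_sub_one_mul_sum {R : Type*} [CommRing R] (f : ι → R) :
    ∑ i, ∑ j ∈ Ioi i, (f i + f j) = ((Fintype.card ι : R) - 1) * ∑ i, f i := by
  rw [sum_sum_Ioi_add_eq_sum_sum_off_diag (fun _ i => f i), mul_sum]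
  refine sum_congr rfl fun i _ => ?_
  rw [sum_const, card_compl, card_singleton, nsmul_eq_mul,
    Nat.cast_sub (Fintype.card_pos_iff.mpr ⟨i⟩), Nat.cast_one]

variable {E : Type*} [SeminormedAddCommGroup E] [InnerProductSpace ℝ E]

theorem norm_sum_sq_eq_sum_add_two_mul_sum_Ioi_inner (x : ι → E) :
    ‖∑ i, x i‖ ^ 2 = ∑ i, ‖x i‖ ^ 2 + 2 * ∑ i, ∑ j ∈ Ioi i, inner ℝ (x i) (x j) := by
  have hoff : 2 * ∑ i, ∑ j ∈ Ioi i, inner ℝ (x i) (x j) =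
      ∑ i, ∑ j ∈ {i}ᶜ, inner ℝ (x i) (x j) := by
    rw [← sum_sum_Ioi_add_eq_sum_sum_off_diag fun j i => inner ℝ (x i) (x j), mul_sum]
    refine sum_congr rfl fun i _ => ?_
    rw [mul_sum]
    exact sum_congr rfl fun j _ => by rw [real_inner_comm (x i) (x j), two_mul]
  rw [hoff, ← real_inner_self_eq_norm_sq, sum_inner, ← sum_add_distrib]
  refine sum_congr rfl fun i _ => ?_
  rw [inner_sum, Fintype.sum_eq_add_sum_compl i, real_inner_self_eq_norm_sq]

theorem sum_sum_Ioi_norm_add_sq (x : ι → E) :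
    ∑ i, ∑ j ∈ Ioi i, ‖x i + x j‖ ^ 2 =
      ((Fintype.card ι : ℝ) - 2) * ∑ i, ‖x i‖ ^ 2 + ‖∑ i, x i‖ ^ 2 := by
  have hpairs := sum_sum_Ioi_add_eq_card_sub_one_mul_sum fun i => ‖x i‖ ^ 2
  simp only [sum_add_distrib] at hpairs
  simp only [norm_add_sq_real, sum_add_distrib, ← mul_sum]
  linear_combination hpairs - norm_sum_sq_eq_sum_add_two_mul_sum_Ioi_inner x

theorem sum_sum_Ioi_norm_add_le (x : ι → E) :
    ∑ i, ∑ j ∈ Ioi i, ‖x i + x j‖ ≤ ((Fintype.card ι : ℝ) - 2) * ∑ i, ‖x i‖ + ‖∑ i, x i‖ := by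
  set n : ℝ := (Fintype.card ι : ℝ)
  set S := ∑ i, ‖x i‖
  set s := ‖∑ i, x i‖
  set P := ∑ i, ∑ j ∈ Ioi i, ‖x i + x j‖
  have hpairs := sum_sum_Ioi_add_eq_card_sub_one_mul_sum fun i => ‖x i‖
  have hsq := sum_sum_Ioi_norm_add_sq x
  have hsq_norms := sum_sum_Ioi_norm_add_sq fun i => ‖x i‖
  simp only [Real.norm_eq_abs, sq_abs] at hsq_norms
  have hP : P ≤ (n - 1) * S :=
    hpairs ▸ sum_le_sum fun i _ => sum_le_sum fun j _ => norm_add_le _ _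
  have hexpand : ∑ i, ∑ j ∈ Ioi i, (‖x i‖ + ‖x j‖ - ‖x i + x j‖) *
      (S + s - (‖x i‖ + ‖x j‖) - ‖x i + x j‖) = (S + s) * ((n - 2) * S + s - P) := by
    have h : ∀ i, ∀ j ∈ Ioi i, (‖x i‖ + ‖x j‖ - ‖x i + x j‖) *
        (S + s - (‖x i‖ + ‖x j‖) - ‖x i + x j‖) = (S + s) * (‖x i‖ + ‖x j‖)
          - (‖x i‖ + ‖x j‖) ^ 2 - (S + s) * ‖x i + x j‖ + ‖x i + x j‖ ^ 2 :=
      fun _ _ _ => by ring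
    rw [sum_congr rfl fun i _ => sum_congr rfl (h i)]
    simp only [sum_add_distrib, sum_sub_distrib, ← mul_sum] at hpairs ⊢
    linear_combination (S + s) * hpairs - hsq_norms + hsq
  have hnonneg : 0 ≤ (S + s) * ((n - 2) * S + s - P) := by
    rw [← hexpand]
    refine sum_nonneg fun i _ => sum_nonneg fun j hj => mul_nonneg ?_ ?_
    · linarith [norm_add_le (x i) (x j)]
    · linarith [norm_add_le_sum_norm_add_norm_sum x (mem_Ioi.mp hj).ne]
  have hS : 0 ≤ S := sum_nonneg fun i _ => norm_nonneg (x i)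
  have hs : 0 ≤ s := norm_nonneg _
  rcases (add_nonneg hS hs).eq_or_lt with hT | hT
  · have hS0 : S = 0 := by linarith
    have hs0 : s = 0 := by linarith
    simp only [hS0, hs0, mul_zero, add_zero] at hP ⊢
    exact hP
  · linarith [nonneg_of_mul_nonneg_right hnonneg hT]

end Hlawka

theorem Matrix.re_trace_conjTranspose_mul_self {m n 𝕜 : Type*} [Fintype m] [Fintype n]
    [RCLike 𝕜] (M : Matrix m n 𝕜) :
    RCLike.re (Mᴴ * M).trace = ‖WithLp.toLp 2 fun p : m × n => M p.1 p.2‖ ^ 2 := by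
  rw [EuclideanSpace.norm_sq_eq, Fintype.sum_prod_type, sum_comm, trace, map_sum]
  refine sum_congr rfl fun j _ => ?_
  rw [diag_apply, mul_apply, map_sum]
  refine sum_congr rfl fun i _ => ?_
  rw [conjTranspose_apply, RCLike.star_def, RCLike.conj_mul, ← RCLike.ofReal_pow,
    RCLike.ofReal_re]

noncomputable def skewVec {d : ℕ} {ρ : Matrix (Fin d) (Fin d) ℂ} (hρ : ρ.PosSemidef) :
    Matrix (Fin d) (Fin d) ℂ →+ EuclideanSpace ℂ (Fin d × Fin d) where
  toFun A := (√2 : ℝ)⁻¹ • WithLp.toLp 2 fun p => (hρ.sqrt * A - A * hρ.sqrt) p.1 p.2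
  map_zero' := by ext; simp
  map_add' A B := by
    rw [← smul_add, ← WithLp.toLp_add]
    congr 2
    ext p
    simp only [mul_add, add_mul, Matrix.sub_apply, Matrix.add_apply, Pi.add_apply]
    ring

theorem sqrt_skewInfo_eq_norm_skewVec {d : ℕ} {ρ : Matrix (Fin d) (Fin d) ℂ}
    (hρ : ρ.PosSemidef) (A : Matrix (Fin d) (Fin d) ℂ) :
    √(skewInfo hρ A) = ‖skewVec hρ A‖ := by
  rw [skewInfo, ← RCLike.re_to_complex, Matrix.re_trace_conjTranspose_mul_self,
    Real.sqrt_mul' _ (sq_nonneg _), Real.sqrt_sq (norm_nonneg _), one_div, Real.sqrt_inv,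
    skewVec, AddMonoidHom.coe_mk, ZeroHom.coe_mk, norm_smul, norm_inv,
    Real.norm_of_nonneg (Real.sqrt_nonneg 2)]

theorem stmt_9_general {d N : ℕ} (hN : 3 ≤ N)
    (ρ : Matrix (Fin d) (Fin d) ℂ) (hρ : ρ.PosSemidef)
    (U : Fin N → Matrix (Fin d) (Fin d) ℂ) :
    ∑ s, Real.sqrt (skewInfo hρ (U s)) ≥
      (1 / ((N : ℝ) - 2)) *
        ((∑ s : Fin N, ∑ t ∈ Finset.Ioi s, Real.sqrt (skewInfo hρ (U s + U t)))
          - Real.sqrt (skewInfo hρ (∑ s, U s))) := by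
  have hN2 : (0 : ℝ) < N - 2 := by
    have : (3 : ℝ) ≤ N := by exact_mod_cast hN
    linarith
  have hlawka := sum_sum_Ioi_norm_add_le fun s => skewVec hρ (U s)
  rw [Fintype.card_fin] at hlawka
  simp only [sqrt_skewInfo_eq_norm_skewVec, map_add, map_sum]
  rw [ge_iff_le, one_div, inv_mul_le_iff₀ hN2]
  linarith

theorem stmt_9 {d N : ℕ} (hN : 3 ≤ N)
    (ρ : Matrix (Fin d) (Fin d) ℂ) (hρ : ρ.PosSemidef) (htr : ρ.trace = 1)
    (U : Fin N → Matrix (Fin d) (Fin d) ℂ)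
    (hU : ∀ s, U s ∈ Matrix.unitaryGroup (Fin d) ℂ) :
    ∑ s, Real.sqrt (skewInfo hρ (U s)) ≥
      (1 / ((N : ℝ) - 2)) *
        ((∑ s : Fin N, ∑ t ∈ Finset.Ioi s, Real.sqrt (skewInfo hρ (U s + U t)))
          - Real.sqrt (skewInfo hρ (∑ s, U s))) :=
  stmt_9_general hN ρ hρ U
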